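/- arXiv:2106.01180 — 3 statements merged into one kernel-verified Lean document; each statement's English description precedes it below -/
import Mathlib

section
/- For every h ≥ 0 there exists a unique β > 0 satisfying β² = 2·r(tanh(β·h)), where r is the modified binary entropy. Moreover this solution lies in the interval (0, √(2 ln 2)] for h > 0, and equals √(2 ln 2) when h = 0. -/
/-!
`r(y) = H((1 - y)/2)` for the binary entropy `H`, so `r ≤ ln 2 = r 0` and `r` decreases on
`[0, 1]`. For `h ≥ 0` the map `β ↦ 2 r(tanh(βh))` is therefore continuous and non-increasing on
`[0, ∞)`, while `β ↦ β²` is strictly increasing: the two graphs cross exactly once, at some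
`β ∈ (0, √(2 ln 2)]`, and at `h = 0` the crossing is at `β² = 2 r 0 = 2 ln 2`.
-/

open Real

/-- The modified binary entropy. -/
noncomputable def modEntropy (y : ℝ) : ℝ :=
  -((1 - y) / 2 * Real.log ((1 - y) / 2)) - (1 + y) / 2 * Real.log ((1 + y) / 2)

open Set

theorem existsUnique_eq_of_strictMonoOn_of_antitoneOn {f g : ℝ → ℝ} {a b : ℝ} (hab : a ≤ b)
    (hf : ContinuousOn f (Icc a b)) (hg : ContinuousOn g (Icc a b))
    (hf_mono : StrictMonoOn f (Ici a)) (hg_anti : AntitoneOn g (Ici a))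
    (ha : f a < g a) (hb : g b ≤ f b) : ∃! x, a < x ∧ f x = g x := by
  have hfg_mono : StrictMonoOn (f - g) (Ici a) := fun x hx y hy hxy => by
    simp only [Pi.sub_apply]
    linarith [hf_mono hx hy hxy, hg_anti hx hy hxy.le]
  obtain ⟨x, hx, hx_root⟩ : ∃ x ∈ Icc a b, (f - g) x = 0 :=
    intermediate_value_Icc hab (hf.sub hg) ⟨(sub_neg.mpr ha).le, sub_nonneg.mpr hb⟩
  have hfx : f x = g x := sub_eq_zero.mp hx_root
  have hax : a < x := hx.1.lt_of_ne fun hxa => ha.ne (hxa ▸ hfx)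
  refine ⟨x, ⟨hax, hfx⟩, fun y ⟨hay, hfy⟩ => hfg_mono.injOn hay.le hx.1 ?_⟩
  simp only [Pi.sub_apply, hfy, hfx, sub_self]

namespace Real

theorem strictMono_tanh : StrictMono tanh := fun a b hab => by
  rwa [← artanh_lt_artanh_iff ⟨neg_one_lt_tanh a, tanh_lt_one a⟩
    ⟨neg_one_lt_tanh b, tanh_lt_one b⟩, artanh_tanh, artanh_tanh]

@[fun_prop]
theorem continuous_tanh : Continuous tanh :=
  (continuous_sinh.div continuous_cosh fun x => (cosh_pos x).ne').congr fun x =>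
    (tanh_eq_sinh_div_cosh x).symm

theorem tanh_nonneg {x : ℝ} (hx : 0 ≤ x) : 0 ≤ tanh x :=
  tanh_zero ▸ strictMono_tanh.monotone hx

end Real

theorem modEntropy_eq_binEntropy (y : ℝ) : modEntropy y = binEntropy ((1 - y) / 2) := by
  have h : 1 - (1 - y) / 2 = (1 + y) / 2 := by ring
  rw [binEntropy, h, log_inv, log_inv, modEntropy]
  ring

theorem modEntropy_le_log_two (y : ℝ) : modEntropy y ≤ log 2 :=
  modEntropy_eq_binEntropy y ▸ binEntropy_le_log_two

theorem modEntropy_zero : modEntropy 0 = log 2 := by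
  rw [modEntropy_eq_binEntropy, show (1 - 0 : ℝ) / 2 = 2⁻¹ by norm_num, binEntropy_two_inv]

@[fun_prop]
theorem continuous_modEntropy : Continuous modEntropy := by
  simp_rw [funext modEntropy_eq_binEntropy]
  fun_prop

theorem strictAntiOn_modEntropy : StrictAntiOn modEntropy (Icc 0 1) := by
  intro a ⟨ha₀, ha₁⟩ b ⟨hb₀, hb₁⟩ hab
  simp only [modEntropy_eq_binEntropy]
  exact binEntropy_strictMonoOn ⟨by linarith, by linarith⟩ ⟨by linarith, by linarith⟩
    (by linarith)

theorem antitoneOn_modEntropy_tanh_mul {h : ℝ} (hh : 0 ≤ h) :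
    AntitoneOn (fun β => modEntropy (tanh (β * h))) (Ici 0) := fun _ ha _ _ hab =>
  strictAntiOn_modEntropy.antitoneOn
    ⟨tanh_nonneg (mul_nonneg ha hh), (tanh_lt_one _).le⟩
    ⟨tanh_nonneg (mul_nonneg (ha.trans hab) hh), (tanh_lt_one _).le⟩
    (strictMono_tanh.monotone (mul_le_mul_of_nonneg_right hab hh))

theorem le_sqrt_two_mul_log_two_of_sq_eq {β y : ℝ} (hβ : 0 < β)
    (hβy : β ^ 2 = 2 * modEntropy y) : β ≤ √(2 * log 2) :=
  (le_sqrt' hβ).mpr (hβy ▸ by linarith [modEntropy_le_log_two y])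

/-- For every `h ≥ 0` there exists a unique `β > 0` with `β² = 2 r(tanh(βh))`;
for `h > 0` the solution lies in `(0, √(2 ln 2)]`, and for `h = 0` it equals `√(2 ln 2)`. -/
theorem exists_unique_critical_beta :
    (∀ h : ℝ, 0 ≤ h → ∃! β : ℝ, 0 < β ∧ β ^ 2 = 2 * modEntropy (Real.tanh (β * h))) ∧
    (∀ h : ℝ, 0 < h → ∀ β : ℝ,
      (0 < β ∧ β ^ 2 = 2 * modEntropy (Real.tanh (β * h))) →
        β ∈ Set.Ioc 0 (Real.sqrt (2 * Real.log 2))) ∧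
    (∀ β : ℝ, (0 < β ∧ β ^ 2 = 2 * modEntropy (Real.tanh (β * 0))) →
      β = Real.sqrt (2 * Real.log 2)) := by
  have hlog : 0 < 2 * log 2 := by positivity
  refine ⟨fun h hh => ?_, fun h _ β ⟨hβ, hβh⟩ => ⟨hβ, le_sqrt_two_mul_log_two_of_sq_eq hβ hβh⟩,
    fun β ⟨hβ, hβ0⟩ => ?_⟩
  · refine existsUnique_eq_of_strictMonoOn_of_antitoneOn (b := √(2 * log 2)) (sqrt_nonneg _)
      (by fun_prop) (by fun_prop) (fun _ ha _ _ hab => pow_lt_pow_left₀ hab ha two_ne_zero)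
      (fun _ ha _ hb hab => by gcongr; exact antitoneOn_modEntropy_tanh_mul hh ha hb hab) ?_ ?_
    · simp [modEntropy_zero, hlog]
    · rw [sq_sqrt hlog.le]
      linarith [modEntropy_le_log_two (tanh (√(2 * log 2) * h))]
  · rw [mul_zero, tanh_zero, modEntropy_zero] at hβ0
    rw [← hβ0, sqrt_sq hβ.le]
end

section
/- As h → ∞, the unique positive solution β_c(h) of β² = 2·r(tanh(βh)) satisfies lim_{h→∞} (h·β_c(h))/ln h = 1. -/
/-!
Put `x = β h`. The identity `r(tanh x) = log (1 + e^{-2x}) + 2x e^{-2x} / (1 + e^{-2x})` gives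
`x e^{-2x} ≤ r(tanh x) ≤ (1 + 2x) e^{-2x}`, so the critical equation `x² = 2 h² r(tanh x)` pins
`x e^{2x}` between `2 h²` and `6 h²` once `x ≥ 1`. Taking logarithms, `2x + log x = 2 log h + O(1)`,
whence `x → ∞` and `x / log h → 1`.
-/

open Real Filter

open Topology

theorem tanh_eq_one_sub_exp_div (x : ℝ) :
    tanh x = (1 - exp (-(2 * x))) / (1 + exp (-(2 * x))) := by
  have hexp : exp (-(2 * x)) = exp (-x) / exp x := by
    rw [← exp_sub]; ring_nf
  rw [tanh_eq, hexp]
  field_simp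

theorem one_sub_tanh_div_two (x : ℝ) :
    (1 - tanh x) / 2 = exp (-(2 * x)) / (1 + exp (-(2 * x))) := by
  rw [tanh_eq_one_sub_exp_div]
  field_simp
  ring

theorem one_add_tanh_div_two (x : ℝ) :
    (1 + tanh x) / 2 = 1 / (1 + exp (-(2 * x))) := by
  rw [tanh_eq_one_sub_exp_div]
  field_simp
  ring

theorem modEntropy_tanh (x : ℝ) :
    modEntropy (tanh x) =
      log (1 + exp (-(2 * x))) + 2 * x * (exp (-(2 * x)) / (1 + exp (-(2 * x)))) := by
  have hd : 1 + exp (-(2 * x)) ≠ 0 := by positivity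
  rw [modEntropy, one_sub_tanh_div_two, one_add_tanh_div_two,
    log_div (exp_pos _).ne' hd, log_div one_ne_zero hd, log_exp, log_one]
  field_simp
  ring

theorem mul_exp_le_modEntropy_tanh {x : ℝ} (hx : 0 ≤ x) :
    x * exp (-(2 * x)) ≤ modEntropy (tanh x) := by
  set u := exp (-(2 * x))
  have hu : 0 < u := exp_pos _
  have hu1 : u ≤ 1 := exp_le_one_iff.mpr (by linarith)
  have hlog : 0 ≤ log (1 + u) := log_nonneg (by linarith)
  have hq : u / 2 ≤ u / (1 + u) := div_le_div_of_nonneg_left hu.le (by linarith) (by linarith)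
  rw [modEntropy_tanh]
  nlinarith [mul_le_mul_of_nonneg_left hq hx]

theorem modEntropy_tanh_le {x : ℝ} (hx : 0 ≤ x) :
    modEntropy (tanh x) ≤ (1 + 2 * x) * exp (-(2 * x)) := by
  set u := exp (-(2 * x))
  have hu : 0 < u := exp_pos _
  have hlog : log (1 + u) ≤ u := by linarith [log_le_sub_one_of_pos (by linarith : 0 < 1 + u)]
  have hq : u / (1 + u) ≤ u := div_le_self hu.le (by linarith)
  rw [modEntropy_tanh]
  nlinarith [mul_le_mul_of_nonneg_left hq (by linarith : 0 ≤ 2 * x)]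

theorem two_mul_sq_le_mul_exp_of_critical {β h : ℝ}
    (heq : β ^ 2 = 2 * modEntropy (tanh (β * h))) (hx : 0 < β * h) :
    2 * h ^ 2 ≤ β * h * exp (2 * (β * h)) := by
  refine le_of_mul_le_mul_left ?_ hx
  calc β * h * (2 * h ^ 2)
      = 2 * (β * h * exp (-(2 * (β * h)))) * h ^ 2 * exp (2 * (β * h)) := by
        rw [exp_neg]; field_simp
    _ ≤ β ^ 2 * h ^ 2 * exp (2 * (β * h)) := by
        gcongr; rw [heq]; gcongr; exact mul_exp_le_modEntropy_tanh hx.le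
    _ = β * h * (β * h * exp (2 * (β * h))) := by ring

theorem mul_exp_le_six_mul_sq_of_critical {β h : ℝ}
    (heq : β ^ 2 = 2 * modEntropy (tanh (β * h))) (hx : 1 ≤ β * h) :
    β * h * exp (2 * (β * h)) ≤ 6 * h ^ 2 := by
  refine le_of_mul_le_mul_left ?_ (by linarith : 0 < β * h)
  calc β * h * (β * h * exp (2 * (β * h)))
      = β ^ 2 * h ^ 2 * exp (2 * (β * h)) := by ring
    _ ≤ 2 * ((1 + 2 * (β * h)) * exp (-(2 * (β * h)))) * h ^ 2 * exp (2 * (β * h)) := by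
        gcongr; rw [heq]; gcongr; exact modEntropy_tanh_le (by linarith)
    _ = 2 * (1 + 2 * (β * h)) * h ^ 2 := by
        rw [exp_neg]; field_simp
    _ ≤ β * h * (6 * h ^ 2) := by nlinarith [sq_nonneg h]

theorem tendsto_atTop_of_mul_sq_le_mul_exp {x : ℝ → ℝ} {c : ℝ} (hc : 0 < c)
    (hx : ∀ᶠ h in atTop, c * h ^ 2 ≤ x h * exp (2 * x h)) : Tendsto x atTop atTop := by
  have hlog : Tendsto (fun h : ℝ => log (c * h ^ 2) / 3) atTop atTop :=
    (tendsto_log_atTop.comp ((tendsto_pow_atTop two_ne_zero).const_mul_atTop hc)).atTop_div_const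
      (by norm_num)
  refine tendsto_atTop_mono' _ ?_ hlog
  filter_upwards [hx, eventually_gt_atTop 0] with h hle hh
  have hexp : x h * exp (2 * x h) ≤ exp (3 * x h) := by
    rw [show 3 * x h = x h + 2 * x h by ring, exp_add]
    gcongr
    linarith [add_one_le_exp (x h)]
  have : log (c * h ^ 2) ≤ 3 * x h := by
    rw [← log_exp (3 * x h)]
    exact log_le_log (by positivity) (hle.trans hexp)
  linarith

theorem tendsto_one_add_log_sub_div_atTop (c : ℝ) :
    Tendsto (fun t : ℝ => 1 + (log t - c) / (2 * t)) atTop (𝓝 1) := by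
  have hlog := tendsto_pow_log_div_mul_add_atTop 2 0 1 two_ne_zero
  have hc : Tendsto (fun t : ℝ => c / (2 * t)) atTop (𝓝 0) :=
    tendsto_const_nhds.div_atTop (tendsto_id.const_mul_atTop two_pos)
  simpa [sub_div] using (hlog.sub hc).const_add 1

theorem tendsto_div_log_of_mul_exp_bounds {x : ℝ → ℝ} {a b : ℝ} (ha : 0 < a) (hb : 0 < b)
    (hx : Tendsto x atTop atTop)
    (hlow : ∀ᶠ h in atTop, a * h ^ 2 ≤ x h * exp (2 * x h))
    (hup : ∀ᶠ h in atTop, x h * exp (2 * x h) ≤ b * h ^ 2) :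
    Tendsto (fun h => x h / log h) atTop (𝓝 1) := by
  suffices Tendsto (fun h => log h / x h) atTop (𝓝 1) by
    simpa using this.inv₀ one_ne_zero
  have hlog_mul_exp {t : ℝ} (ht : 0 < t) : log (t * exp (2 * t)) = log t + 2 * t := by
    rw [log_mul ht.ne' (exp_pos _).ne', log_exp]
  have hlog_mul_sq {c t : ℝ} (hc : 0 < c) (ht : 0 < t) : log (c * t ^ 2) = log c + 2 * log t := by
    rw [log_mul hc.ne' (by positivity), log_pow]; push_cast; ring
  refine tendsto_of_tendsto_of_tendsto_of_le_of_le'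
    ((tendsto_one_add_log_sub_div_atTop (log b)).comp hx)
    ((tendsto_one_add_log_sub_div_atTop (log a)).comp hx) ?_ ?_
  · filter_upwards [hup, hx.eventually_gt_atTop 0, eventually_gt_atTop 0] with h hle hxpos hh
    have := log_le_log (by positivity) hle
    rw [hlog_mul_exp hxpos, hlog_mul_sq hb hh] at this
    simp only [Function.comp_apply]
    rw [← sub_nonneg]
    field_simp
    linarith
  · filter_upwards [hlow, hx.eventually_gt_atTop 0, eventually_gt_atTop 0] with h hle hxpos hh
    have := log_le_log (by positivity) hle
    rw [hlog_mul_exp hxpos, hlog_mul_sq ha hh] at this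
    simp only [Function.comp_apply]
    rw [← sub_nonneg]
    field_simp
    linarith

/-- As `h → ∞`, the unique positive solution `β_c(h)` of `β² = 2 r(tanh(βh))` satisfies
`lim_{h→∞} h·β_c(h)/ln h = 1`. -/
theorem critical_beta_large_field (βc : ℝ → ℝ)
    (hβc : ∀ h : ℝ, 0 ≤ h →
      0 < βc h ∧ (βc h) ^ 2 = 2 * modEntropy (Real.tanh (βc h * h))) :
    Tendsto (fun h : ℝ => h * βc h / Real.log h) atTop (nhds 1) := by
  have hlow : ∀ᶠ h in atTop, 2 * h ^ 2 ≤ βc h * h * exp (2 * (βc h * h)) := by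
    filter_upwards [eventually_gt_atTop 0] with h hh
    exact two_mul_sq_le_mul_exp_of_critical (hβc h hh.le).2 (mul_pos (hβc h hh.le).1 hh)
  have hx : Tendsto (fun h => βc h * h) atTop atTop :=
    tendsto_atTop_of_mul_sq_le_mul_exp two_pos hlow
  have hup : ∀ᶠ h in atTop, βc h * h * exp (2 * (βc h * h)) ≤ 6 * h ^ 2 := by
    filter_upwards [eventually_gt_atTop 0, hx.eventually_ge_atTop 1] with h hh hx1
    exact mul_exp_le_six_mul_sq_of_critical (hβc h hh.le).2 hx1
  simpa only [mul_comm] using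
    tendsto_div_log_of_mul_exp_bounds two_pos (by norm_num) hx hlow hup
end

section
/- For the REM (A(x) = 1_{x=1}), constant fields h, Γ ≥ 0, and β ≥ 0, the limiting pressure max{Φ^REM(β,h), ln(2 cosh(β√(h²+Γ²)))} has the following property: the critical transversal field Γ_c(β,h) = √(β⁻²·arcosh(½·exp(Φ^REM(β,h)))² − h²) satisfies lim_{β→0} Γ_c(β,h) = 1 for every h ≥ 0. -/
/-! For `β < β_c(h)`, in particular for all small `β > 0`, the REM pressure is the annealed one, so
`½ e^{Φ} = f(β) := e^{β²/2} cosh(βh)`, and `arcosh f = arsinh √(f² - 1)`. Expanding,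
`(f² - 1) / β² → 1 + h²`, and since `arsinh u ~ u` this gives `arcosh f(β) / β → √(1 + h²)`;
hence `Γ_c(β, h) = √((arcosh f(β) / β)² - h²) → 1`. -/

open Real Filter

/-- The inverse hyperbolic cosine, `arcosh x = ln(x + √(x² − 1))`. -/
noncomputable def arcosh (x : ℝ) : ℝ := Real.log (x + Real.sqrt (x ^ 2 - 1))

/-- The REM pressure with longitudinal field `h`, given the freezing temperature
function `βc`. -/
noncomputable def PhiREM (βc : ℝ → ℝ) (β h : ℝ) : ℝ :=
  if β ≤ βc h then Real.log 2 + β ^ 2 / 2 + Real.log (Real.cosh (β * h))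
  else β * (βc h + h * Real.tanh (βc h * h))

/-- The critical transversal field of the QREM. -/
noncomputable def GammaC (βc : ℝ → ℝ) (β h : ℝ) : ℝ :=
  Real.sqrt (β⁻¹ ^ 2 * (_root_.arcosh ((1 / 2) * Real.exp (PhiREM βc β h))) ^ 2 - h ^ 2)

open Topology

lemma Real.arcosh_eq_arsinh_sqrt {y : ℝ} (hy : 1 ≤ y) : Real.arcosh y = arsinh √(y ^ 2 - 1) := by
  rw [← sinh_arcosh hy, arsinh_sinh]

lemma tendsto_div_self_of_hasDerivAt {f : ℝ → ℝ} {d : ℝ} (hf : HasDerivAt f d 0) (h0 : f 0 = 0) :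
    Tendsto (fun x => f x / x) (𝓝[≠] 0) (𝓝 d) :=
  (hasDerivAt_iff_tendsto_slope_zero.mp hf).congr fun x => by simp [h0, div_eq_inv_mul]

lemma Filter.Tendsto.arsinh_div {α : Type*} {l : Filter α} {u g : α → ℝ} {c : ℝ}
    (hu : Tendsto u l (𝓝[≠] 0)) (hug : Tendsto (fun x => u x / g x) l (𝓝 c)) :
    Tendsto (fun x => Real.arsinh (u x) / g x) l (𝓝 c) := by
  have harsinh : Tendsto (fun x => Real.arsinh (u x) / u x) l (𝓝 1) := by
    simpa [Function.comp_def] using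
      (tendsto_div_self_of_hasDerivAt (hasDerivAt_arsinh 0) arsinh_zero).comp hu
  refine (one_mul c ▸ harsinh.mul hug).congr' ?_
  filter_upwards [hu self_mem_nhdsWithin] with x (hx : u x ≠ 0)
  field_simp

lemma tendsto_exp_mul_cosh_sq_sub_one_div_sq (h : ℝ) :
    Tendsto (fun β => ((exp (β ^ 2 / 2) * cosh (β * h)) ^ 2 - 1) / β ^ 2) (𝓝[≠] 0)
      (𝓝 (1 + h ^ 2)) := by
  have hsq : Tendsto (fun β : ℝ => β ^ 2) (𝓝[≠] 0) (𝓝[≠] 0) :=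
    tendsto_nhdsWithin_of_tendsto_nhds_of_eventually_within _
      (by simpa using ((continuous_pow 2).tendsto (0 : ℝ)).mono_left nhdsWithin_le_nhds)
      (eventually_nhdsWithin_of_forall fun β hβ => pow_ne_zero 2 hβ)
  have hexp : Tendsto (fun β : ℝ => (exp (β ^ 2) - 1) / β ^ 2) (𝓝[≠] 0) (𝓝 1) := by
    refine (tendsto_div_self_of_hasDerivAt (f := fun x => exp x - 1) ?_ (by simp)).comp hsq
    simpa using (hasDerivAt_exp 0).sub_const 1
  have hcosh : Tendsto (fun β : ℝ => cosh (β * h) ^ 2) (𝓝[≠] 0) (𝓝 1) := by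
    have : Continuous fun β : ℝ => cosh (β * h) ^ 2 := by fun_prop
    simpa using (this.tendsto 0).mono_left nhdsWithin_le_nhds
  have hsinh : Tendsto (fun β : ℝ => sinh (β * h) / β) (𝓝[≠] 0) (𝓝 h) :=
    tendsto_div_self_of_hasDerivAt (by simpa using ((hasDerivAt_id (0 : ℝ)).mul_const h).sinh)
      (by simp)
  -- `(e^{β²/2} cosh βh)² - 1 = (e^{β²} - 1) cosh² βh + sinh² βh`
  refine (one_mul (1 : ℝ) ▸ (hexp.mul hcosh).add (hsinh.pow 2)).congr' ?_
  filter_upwards [self_mem_nhdsWithin] with β (hβ : β ≠ 0)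
  have hexp_sq : exp (β ^ 2 / 2) ^ 2 = exp (β ^ 2) := by rw [← exp_nat_mul]; ring_nf
  rw [mul_pow, hexp_sq, cosh_sq]
  field_simp
  ring

lemma tendsto_arcosh_exp_mul_cosh_div (h : ℝ) :
    Tendsto (fun β => Real.arcosh (exp (β ^ 2 / 2) * cosh (β * h)) / β) (𝓝[>] 0)
      (𝓝 √(1 + h ^ 2)) := by
  set f : ℝ → ℝ := fun β => exp (β ^ 2 / 2) * cosh (β * h)
  have hf : ∀ β, 1 ≤ f β := fun β =>
    one_le_mul_of_one_le_of_one_le (one_le_exp (by positivity)) (one_le_cosh _)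
  have hf_gt : ∀ β ≠ 0, 1 < f β := fun β hβ =>
    one_lt_mul_of_lt_of_le (one_lt_exp_iff.mpr (by positivity)) (one_le_cosh _)
  have hu : Tendsto (fun β => √(f β ^ 2 - 1)) (𝓝[>] 0) (𝓝[≠] 0) := by
    refine tendsto_nhdsWithin_of_tendsto_nhds_of_eventually_within _ ?_ ?_
    · have : Continuous fun β => √(f β ^ 2 - 1) := by fun_prop
      simpa [f] using (this.tendsto 0).mono_left nhdsWithin_le_nhds
    · filter_upwards [self_mem_nhdsWithin] with β (hβ : 0 < β)
      have := hf_gt β hβ.ne'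
      exact (sqrt_pos.mpr (by nlinarith)).ne'
  have hug : Tendsto (fun β => √(f β ^ 2 - 1) / β) (𝓝[>] 0) (𝓝 √(1 + h ^ 2)) := by
    refine (((continuous_sqrt.tendsto _).comp (tendsto_exp_mul_cosh_sq_sub_one_div_sq h)).mono_left
      (nhdsWithin_mono _ fun β (hβ : 0 < β) => hβ.ne')).congr' ?_
    filter_upwards [self_mem_nhdsWithin] with β (hβ : 0 < β)
    simp only [Function.comp_apply, f]
    rw [sqrt_div' _ (sq_nonneg β), sqrt_sq hβ.le]
  refine (hu.arsinh_div hug).congr fun β => ?_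
  rw [arcosh_eq_arsinh_sqrt (hf β)]

lemma half_exp_PhiREM_of_le {βc : ℝ → ℝ} {β h : ℝ} (hβ : β ≤ βc h) :
    1 / 2 * exp (PhiREM βc β h) = exp (β ^ 2 / 2) * cosh (β * h) := by
  rw [PhiREM, if_pos hβ, exp_add, exp_add, exp_log two_pos, exp_log (cosh_pos _)]
  ring

lemma GammaC_eq_of_le {βc : ℝ → ℝ} {β h : ℝ} (hβ : β ≤ βc h) :
    GammaC βc β h = √((Real.arcosh (exp (β ^ 2 / 2) * cosh (β * h)) / β) ^ 2 - h ^ 2) := by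
  rw [GammaC, half_exp_PhiREM_of_le hβ, inv_pow, div_pow, inv_mul_eq_div]
  -- `_root_.arcosh` and Mathlib's `Real.arcosh` are the same formula
  rfl

/-- For the REM with constant fields, the critical transversal field satisfies
`lim_{β→0⁺} Γ_c(β,h) = 1` for every `h ≥ 0`. -/
theorem GammaC_high_temperature_limit (βc : ℝ → ℝ)
    (hβc : ∀ h : ℝ, 0 ≤ h →
      0 < βc h ∧ (βc h) ^ 2 = 2 * modEntropy (Real.tanh (βc h * h))) :
    ∀ h : ℝ, 0 ≤ h →
      Tendsto (fun β => GammaC βc β h) (nhdsWithin 0 (Set.Ioi 0)) (nhds 1) := by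
  intro h hh
  have hlim : Tendsto (fun β => √((Real.arcosh (exp (β ^ 2 / 2) * cosh (β * h)) / β) ^ 2 - h ^ 2))
      (𝓝[>] 0) (𝓝 √(√(1 + h ^ 2) ^ 2 - h ^ 2)) :=
    (continuous_sqrt.tendsto _).comp (((tendsto_arcosh_exp_mul_cosh_div h).pow 2).sub_const _)
  rw [sq_sqrt (by positivity), add_sub_cancel_right, sqrt_one] at hlim
  refine hlim.congr' ?_
  filter_upwards [nhdsWithin_le_nhds (gt_mem_nhds (hβc h hh).1)] with β hβ
  exact (GammaC_eq_of_le hβ.le).symm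
end
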